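/- arXiv:quant-ph/0402170 — 5 statements merged into one kernel-verified Lean document; each statement's English description precedes it below -/
import Mathlib

section
/- Let p₀ and p₁ be probability density functions on [0, 2π] with c_{p_a} ≠ 0 for a = 0, 1, and set φ_a = (1/2)·arctan(s_{p_a}/c_{p_a}). Define ρ_a^g = ∫₀^{2π} p_a(α) R(α)ᵀ I^g R(α) dα, P_a^g = R(φ_a)ᵀ I^g R(φ_a), and S_a = R(−φ_a). Then there exist 2×2 matrices P̃_a^g (a, g ∈ {0,1}) and real angles ψ₀, ψ₁ with T_a = R(ψ_a) such that for all a, g ∈ {0,1}: (i) P̃_a^0 + P̃_a^1 = 1₂ and P_a^0 + P_a^1 = 1₂; (ii) ρ_0^0 + ρ_0^1 = ρ_1^0 + ρ_1^1 = 1₂; (iii) Tr(P_a^g) = 1; (iv) T_aᵀ P_a^g T_a = P̃_a^g; (v) P̃_a^0 · P̃_a^1 = 0; (vi) P̃_a^g ρ_{1−a}^0 P̃_a^g = P̃_a^g ρ_{1−a}^1 P̃_a^g; (vii) S_aᵀ P_a^g S_a and S_aᵀ ρ_a^g S_a are diagonal matrices; (viii) Tr(P_a^g · ρ_a^{1−g})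 ≤ max(s⁽²⁾_{p₀^{φ₀}}, s⁽²⁾_{p₁^{φ₁}}); (ix) the sum of the absolute values of the eigenvalues of the Hermitian matrix P_a^g − P̃_a^g is at most min(2|sin(φ₁ − φ₀ − π/4)|, 2|sin(φ₀ − φ₁ − π/4)|). -/
open Real Matrix MeasureTheory

/-- The 2×2 rotation matrix `[[cos α, sin α], [−sin α, cos α]]`. -/
noncomputable def Rot (α : ℝ) : Matrix (Fin 2) (Fin 2) ℝ :=
  !![Real.cos α, Real.sin α; -Real.sin α, Real.cos α]

/-- `I⁰ = [[1,0],[0,0]]` and `I¹ = [[0,0],[0,1]]`, here as `Iproj g` for `g : Fin 2`. -/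
def Iproj (g : Fin 2) : Matrix (Fin 2) (Fin 2) ℝ :=
  Matrix.diagonal (fun i => if i = g then 1 else 0)

/-- first moment `s_p = ∫₀^{2π} p(α) sin 2α dα`. -/
noncomputable def sMom (p : ℝ → ℝ) : ℝ := ∫ α in (0:ℝ)..(2*π), p α * Real.sin (2*α)

/-- first moment `c_p = ∫₀^{2π} p(α) cos 2α dα`. -/
noncomputable def cMom (p : ℝ → ℝ) : ℝ := ∫ α in (0:ℝ)..(2*π), p α * Real.cos (2*α)

/-- second moment `s⁽²⁾_p = ∫₀^{2π} p(α) sin²α dα`. -/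
noncomputable def s2Mom (p : ℝ → ℝ) : ℝ := ∫ α in (0:ℝ)..(2*π), p α * (Real.sin α)^2

/-- the shifted density `p^φ(α) = p((α + φ) mod 2π)`. -/
noncomputable def pShift (p : ℝ → ℝ) (φ : ℝ) (α : ℝ) : ℝ :=
  p (toIcoMod Real.two_pi_pos 0 (α + φ))

/-- entrywise integral `∫₀^{2π} f(α) dα` of a matrix-valued function. -/
noncomputable def mInt (f : ℝ → Matrix (Fin 2) (Fin 2) ℝ) : Matrix (Fin 2) (Fin 2) ℝ :=
  Matrix.of fun i j => ∫ α in (0:ℝ)..(2*π), f α i j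

namespace Stmt0Aux


lemma fin2 (g : Fin 2) : g = 0 ∨ g = 1 := by omega

lemma matrix_ext {a b c d a' b' c' d' : ℝ} (h1 : a = a') (h2 : b = b') (h3 : c = c')
    (h4 : d = d') : !![a, b; c, d] = !![a', b'; c', d'] := by rw [h1, h2, h3, h4]

lemma Iproj_zero : Iproj 0 = !![1, 0; 0, 0] := by
  ext i j; fin_cases i <;> fin_cases j <;> simp [Iproj, Matrix.diagonal_apply]

lemma Iproj_one : Iproj 1 = !![0, 0; 0, 1] := by
  ext i j; fin_cases i <;> fin_cases j <;> simp [Iproj, Matrix.diagonal_apply]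

lemma Rot_mul (α β : ℝ) : Rot α * Rot β = Rot (α + β) := by
  unfold Rot
  rw [Matrix.mul_fin_two]
  exact matrix_ext (by rw [Real.cos_add]; ring) (by rw [Real.sin_add]; ring)
    (by rw [Real.sin_add]; ring) (by rw [Real.cos_add]; ring)

lemma Rot_transpose (α : ℝ) : (Rot α)ᵀ = Rot (-α) := by
  ext i j; fin_cases i <;> fin_cases j <;> simp [Rot]

lemma Rot_zero : Rot 0 = 1 := by
  ext i j; fin_cases i <;> fin_cases j <;> simp [Rot, Matrix.one_apply]

lemma transpose_mul_Rot (α : ℝ) : (Rot α)ᵀ * Rot α = 1 := by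
  rw [Rot_transpose, Rot_mul]; simpa using Rot_zero

lemma Rot_mul_transpose (α : ℝ) : Rot α * (Rot α)ᵀ = 1 := by
  rw [Rot_transpose, Rot_mul]; simpa using Rot_zero

noncomputable def Pm (θ : ℝ) (g : Fin 2) : Matrix (Fin 2) (Fin 2) ℝ :=
  (Rot θ)ᵀ * Iproj g * Rot θ

lemma Pm_zero (θ : ℝ) :
    Pm θ 0 = !![Real.cos θ ^ 2, Real.cos θ * Real.sin θ;
                Real.cos θ * Real.sin θ, Real.sin θ ^ 2] := by
  unfold Pm
  rw [Rot_transpose, Iproj_zero]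
  unfold Rot
  rw [Matrix.mul_fin_two, Matrix.mul_fin_two]
  exact matrix_ext (by simp; try ring) (by simp; try ring) (by simp; try ring) (by simp; try ring)

lemma Pm_one (θ : ℝ) :
    Pm θ 1 = !![Real.sin θ ^ 2, -(Real.cos θ * Real.sin θ);
                -(Real.cos θ * Real.sin θ), Real.cos θ ^ 2] := by
  unfold Pm
  rw [Rot_transpose, Iproj_one]
  unfold Rot
  rw [Matrix.mul_fin_two, Matrix.mul_fin_two]
  exact matrix_ext (by simp; try ring) (by simp; try ring) (by simp; try ring) (by simp; try ring)

lemma Pm_conj (θ ψ : ℝ) (g : Fin 2) :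
    (Rot ψ)ᵀ * Pm θ g * Rot ψ = Pm (θ + ψ) g := by
  unfold Pm
  rw [← Rot_mul, Matrix.transpose_mul]
  simp only [Matrix.mul_assoc]

lemma Iproj_sum : Iproj 0 + Iproj 1 = 1 := by
  ext i j; fin_cases i <;> fin_cases j <;> simp [Iproj, Matrix.diagonal_apply, Matrix.one_apply]

lemma Pm_sum (θ : ℝ) : Pm θ 0 + Pm θ 1 = 1 := by
  unfold Pm
  rw [Matrix.mul_assoc, Matrix.mul_assoc, ← Matrix.mul_add, ← Matrix.add_mul, Iproj_sum,
    Matrix.one_mul, transpose_mul_Rot]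

lemma Pm_trace (θ : ℝ) (g : Fin 2) : (Pm θ g).trace = 1 := by
  rcases fin2 g with rfl | rfl
  · rw [Pm_zero]; simp [Matrix.trace_fin_two]
  · rw [Pm_one]; simp [Matrix.trace_fin_two]

lemma Pm_orth (θ : ℝ) : Pm θ 0 * Pm θ 1 = 0 := by
  rw [Pm_zero, Pm_one, Matrix.mul_fin_two]
  ext i j
  fin_cases i <;> fin_cases j <;> simp <;> ring

lemma Pm_isHermitian (θ : ℝ) (g : Fin 2) : (Pm θ g).IsHermitian := by
  unfold Matrix.IsHermitian Pm Iproj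
  rw [Matrix.conjTranspose_eq_transpose_of_trivial, Matrix.transpose_mul, Matrix.transpose_mul,
    Matrix.transpose_transpose, Matrix.mul_assoc, Matrix.diagonal_transpose]

noncomputable def rhoM (c s : ℝ) (g : Fin 2) : Matrix (Fin 2) (Fin 2) ℝ :=
  if g = 0 then !![(1+c)/2, s/2; s/2, (1-c)/2] else !![(1-c)/2, -(s/2); -(s/2), (1+c)/2]

lemma rhoM_zero (c s : ℝ) : rhoM c s 0 = !![(1+c)/2, s/2; s/2, (1-c)/2] := by simp [rhoM]

lemma rhoM_one (c s : ℝ) : rhoM c s 1 = !![(1-c)/2, -(s/2); -(s/2), (1+c)/2] := by simp [rhoM]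

lemma rhoM_sum (c s : ℝ) : rhoM c s 0 + rhoM c s 1 = 1 := by
  rw [rhoM_zero, rhoM_one]
  ext i j
  fin_cases i <;> fin_cases j <;> simp [Matrix.one_apply] <;> ring

/-- double-angle form of an alignment identity -/
lemma double_angle_form {c s φv : ℝ} (h : c * Real.cos (2*φv) + s * Real.sin (2*φv) = 0) :
    c * (Real.cos φv ^ 2 - Real.sin φv ^ 2) + s * (2 * Real.sin φv * Real.cos φv) = 0 := by
  have hp := Real.sin_sq_add_cos_sq φv
  rw [Real.cos_two_mul, Real.sin_two_mul] at h
  linear_combination h - c * hp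

lemma unbiased {c s θv : ℝ} (h : c * Real.cos (2*θv) + s * Real.sin (2*θv) = 0) (g : Fin 2) :
    Pm θv g * rhoM c s 0 * Pm θv g = Pm θv g * rhoM c s 1 * Pm θv g := by
  have h2 := double_angle_form h
  rcases fin2 g with rfl | rfl
  · rw [Pm_zero, rhoM_zero, rhoM_one, Matrix.mul_fin_two, Matrix.mul_fin_two,
      Matrix.mul_fin_two, Matrix.mul_fin_two]
    exact matrix_ext
      (by linear_combination (Real.cos θv ^ 2) * h2)
      (by linear_combination (Real.cos θv * Real.sin θv) * h2)
      (by linear_combination (Real.cos θv * Real.sin θv) * h2)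
      (by linear_combination (Real.sin θv ^ 2) * h2)
  · rw [Pm_one, rhoM_zero, rhoM_one, Matrix.mul_fin_two, Matrix.mul_fin_two,
      Matrix.mul_fin_two, Matrix.mul_fin_two]
    exact matrix_ext
      (by linear_combination (-(Real.sin θv ^ 2)) * h2)
      (by linear_combination (Real.cos θv * Real.sin θv) * h2)
      (by linear_combination (Real.cos θv * Real.sin θv) * h2)
      (by linear_combination (-(Real.cos θv ^ 2)) * h2)

/-- conjugating `rhoM` by `Rot (-φ)` gives a diagonal matrix, given alignment. -/
lemma rho_conj_diag {c s φv : ℝ} (h : s * Real.cos (2*φv) = c * Real.sin (2*φv)) (g : Fin 2) :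
    ((Rot (-φv))ᵀ * rhoM c s g * Rot (-φv)).IsDiag := by
  have hp := Real.sin_sq_add_cos_sq φv
  have h2 : s * (Real.cos φv ^ 2 - Real.sin φv ^ 2) = c * (2 * Real.sin φv * Real.cos φv) := by
    rw [Real.cos_two_mul, Real.sin_two_mul] at h
    linear_combination h - s * hp
  rw [Rot_transpose, neg_neg]
  intro i j hij
  rcases fin2 g with rfl | rfl
  · rw [rhoM_zero]
    unfold Rot
    rw [Matrix.mul_fin_two, Matrix.mul_fin_two]
    fin_cases i <;> fin_cases j
    · exact absurd rfl hij
    · simp; linear_combination (1/2) * h2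
    · simp; linear_combination (1/2) * h2
    · exact absurd rfl hij
  · rw [rhoM_one]
    unfold Rot
    rw [Matrix.mul_fin_two, Matrix.mul_fin_two]
    fin_cases i <;> fin_cases j
    · exact absurd rfl hij
    · simp; linear_combination (-(1/2)) * h2
    · simp; linear_combination (-(1/2)) * h2
    · exact absurd rfl hij
lemma trace_P_rho (c s φv : ℝ) (g : Fin 2) :
    (Pm φv g * rhoM c s (1 - g)).trace
      = (1 - (c * Real.cos (2*φv) + s * Real.sin (2*φv))) / 2 := by
  have hp := Real.sin_sq_add_cos_sq φv
  rw [Real.cos_two_mul, Real.sin_two_mul]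
  rcases fin2 g with rfl | rfl
  · rw [show (1 - (0:Fin 2)) = 1 from rfl, Pm_zero, rhoM_one, Matrix.mul_fin_two,
      Matrix.trace_fin_two_of]
    linear_combination ((1 + c)/2) * hp
  · rw [show (1 - (1:Fin 2)) = 0 from rfl, Pm_one, rhoM_zero, Matrix.mul_fin_two,
      Matrix.trace_fin_two_of]
    linear_combination ((1 + c)/2) * hp

lemma eig_sum (x y : ℝ) (hH : (!![x, y; y, -x] : Matrix (Fin 2) (Fin 2) ℝ).IsHermitian) :
    ∑ i, |hH.eigenvalues i| = 2 * Real.sqrt (x^2 + y^2) := by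
  have htr : (!![x, y; y, -x] : Matrix (Fin 2) (Fin 2) ℝ).trace = ∑ i, hH.eigenvalues i := by
    nth_rewrite 1 [hH.spectral_theorem]
    rw [Unitary.conjStarAlgAut_apply, Matrix.trace_mul_cycle, Unitary.coe_star_mul_self, one_mul,
      Matrix.trace_diagonal]
    simp
  have hdet : hH.eigenvalues 0 * hH.eigenvalues 1 = -(x^2+y^2) := by
    have h := hH.det_eq_prod_eigenvalues
    rw [Fin.prod_univ_two, Matrix.det_fin_two_of] at h
    simp only [RCLike.ofReal_real_eq_id, id_eq] at h
    linear_combination -h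
  have h0 : hH.eigenvalues 0 + hH.eigenvalues 1 = 0 := by
    rw [Fin.sum_univ_two] at htr
    rw [Matrix.trace_fin_two_of] at htr
    linarith
  have h1 : hH.eigenvalues 1 = - hH.eigenvalues 0 := by linarith
  have hsq : hH.eigenvalues 0 ^ 2 = x^2 + y^2 := by
    rw [h1] at hdet
    linear_combination -hdet
  rw [Fin.sum_univ_two, h1, abs_neg, ← Real.sqrt_sq_eq_abs, hsq]
  ring

lemma Pm_zero_angle (g : Fin 2) : Pm 0 g = Iproj g := by
  unfold Pm
  rw [Rot_zero, Matrix.transpose_one, Matrix.one_mul, Matrix.mul_one]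

lemma P_conj_diag (φv : ℝ) (g : Fin 2) : ((Rot (-φv))ᵀ * Pm φv g * Rot (-φv)).IsDiag := by
  rw [Pm_conj, add_neg_cancel, Pm_zero_angle]
  exact Matrix.isDiag_diagonal _

lemma Pm_one_eq (θ : ℝ) : Pm θ 1 = 1 - Pm θ 0 := by
  rw [← Pm_sum θ]; abel

lemma Pm_sub_zero (φv θv : ℝ) :
    Pm φv 0 - Pm θv 0
      = !![Real.cos φv^2 - Real.cos θv^2,
           Real.cos φv * Real.sin φv - Real.cos θv * Real.sin θv;
           Real.cos φv * Real.sin φv - Real.cos θv * Real.sin θv,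
           -(Real.cos φv^2 - Real.cos θv^2)] := by
  have hpφ := Real.sin_sq_add_cos_sq φv
  have hpθ := Real.sin_sq_add_cos_sq θv
  rw [Pm_zero, Pm_zero]
  ext i j
  fin_cases i <;> fin_cases j <;> simp [Matrix.sub_apply] <;> linarith [hpφ, hpθ]

lemma xy_identity (φv θv : ℝ) :
    (Real.cos φv^2 - Real.cos θv^2)^2
      + (Real.cos φv * Real.sin φv - Real.cos θv * Real.sin θv)^2
      = Real.sin (φv - θv)^2 := by
  have hpφ := Real.sin_sq_add_cos_sq φv
  have hpθ := Real.sin_sq_add_cos_sq θv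
  rw [Real.sin_sub]
  linear_combination (Real.cos φv^2) * (hpφ - hpθ) + (Real.cos θv^2) * (hpθ - hpφ)

lemma eig_congr {A B : Matrix (Fin 2) (Fin 2) ℝ} (h : A = B) (hA : A.IsHermitian)
    (hB : B.IsHermitian) : hA.eigenvalues = hB.eigenvalues := by subst h; rfl

lemma eig_sum_Pm_sub (φv θv : ℝ) (g : Fin 2) (hH : (Pm φv g - Pm θv g).IsHermitian) :
    ∑ i, |hH.eigenvalues i| = 2 * |Real.sin (φv - θv)| := by
  rcases fin2 g with rfl | rfl
  · have hM : Pm φv 0 - Pm θv 0 = !![Real.cos φv^2 - Real.cos θv^2,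
        Real.cos φv * Real.sin φv - Real.cos θv * Real.sin θv;
        Real.cos φv * Real.sin φv - Real.cos θv * Real.sin θv,
        -(Real.cos φv^2 - Real.cos θv^2)] := Pm_sub_zero φv θv
    have hH' := hM ▸ hH
    rw [eig_congr hM hH hH', eig_sum _ _ hH', xy_identity, Real.sqrt_sq_eq_abs]
  · have hM : Pm φv 1 - Pm θv 1 = !![Real.cos θv^2 - Real.cos φv^2,
        Real.cos θv * Real.sin θv - Real.cos φv * Real.sin φv;
        Real.cos θv * Real.sin θv - Real.cos φv * Real.sin φv,
        -(Real.cos θv^2 - Real.cos φv^2)] := by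
      rw [Pm_one_eq, Pm_one_eq, show (1 - Pm φv 0) - (1 - Pm θv 0) = Pm θv 0 - Pm φv 0 by abel,
        Pm_sub_zero θv φv]
    have hH' := hM ▸ hH
    rw [eig_congr hM hH hH', eig_sum _ _ hH', xy_identity, Real.sqrt_sq_eq_abs, ← abs_neg,
      ← Real.sin_neg, neg_sub]
lemma mInt_apply (f : ℝ → Matrix (Fin 2) (Fin 2) ℝ) (i j : Fin 2) :
    mInt f i j = ∫ α in (0:ℝ)..(2*π), f α i j := rfl

lemma mInt_congr {f g : ℝ → Matrix (Fin 2) (Fin 2) ℝ}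
    (h : ∀ α ∈ Set.uIcc (0:ℝ) (2*π), f α = g α) : mInt f = mInt g := by
  ext i j
  rw [mInt_apply, mInt_apply]
  exact intervalIntegral.integral_congr (fun α hα => by rw [h α hα])

lemma mInt_fin (f00 f01 f10 f11 : ℝ → ℝ) :
    mInt (fun α => !![f00 α, f01 α; f10 α, f11 α]) =
      !![∫ α in (0:ℝ)..(2*π), f00 α, ∫ α in (0:ℝ)..(2*π), f01 α;
         ∫ α in (0:ℝ)..(2*π), f10 α, ∫ α in (0:ℝ)..(2*π), f11 α] := by
  ext i j
  fin_cases i <;> fin_cases j <;> rfl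

lemma int_cos_sq (p : ℝ → ℝ) (hI : IntervalIntegrable p volume 0 (2*π))
    (hp1 : ∫ α in (0:ℝ)..(2*π), p α = 1) :
    ∫ α in (0:ℝ)..(2*π), p α * Real.cos α ^ 2 = (1 + cMom p)/2 := by
  have hcont : Continuous fun α : ℝ => Real.cos (2*α) := by fun_prop
  have h1 : Set.EqOn (fun α => p α * Real.cos α ^ 2)
      (fun α => (p α + p α * Real.cos (2*α))/2) (Set.uIcc 0 (2*π)) := by
    intro α _
    simp only
    rw [Real.cos_sq]
    ring
  rw [intervalIntegral.integral_congr h1, intervalIntegral.integral_div,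
    intervalIntegral.integral_add hI (hI.mul_continuousOn hcont.continuousOn), hp1]
  rfl

lemma int_sin_sq (p : ℝ → ℝ) (hI : IntervalIntegrable p volume 0 (2*π))
    (hp1 : ∫ α in (0:ℝ)..(2*π), p α = 1) :
    ∫ α in (0:ℝ)..(2*π), p α * Real.sin α ^ 2 = (1 - cMom p)/2 := by
  have hcont : Continuous fun α : ℝ => Real.cos (2*α) := by fun_prop
  have h1 : Set.EqOn (fun α => p α * Real.sin α ^ 2)
      (fun α => (p α - p α * Real.cos (2*α))/2) (Set.uIcc 0 (2*π)) := by
    intro α _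
    simp only
    have hs : Real.sin α ^ 2 = 1 - Real.cos α ^ 2 := by
      have := Real.sin_sq_add_cos_sq α; linarith
    rw [hs, Real.cos_sq]
    ring
  rw [intervalIntegral.integral_congr h1, intervalIntegral.integral_div,
    intervalIntegral.integral_sub hI (hI.mul_continuousOn hcont.continuousOn), hp1]
  rfl

lemma int_cos_sin (p : ℝ → ℝ) :
    ∫ α in (0:ℝ)..(2*π), p α * (Real.cos α * Real.sin α) = sMom p / 2 := by
  have h1 : Set.EqOn (fun α => p α * (Real.cos α * Real.sin α))
      (fun α => (p α * Real.sin (2*α))/2) (Set.uIcc 0 (2*π)) := by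
    intro α _
    simp only
    rw [Real.sin_two_mul]
    ring
  rw [intervalIntegral.integral_congr h1, intervalIntegral.integral_div]
  rfl

lemma rho_eq (p : ℝ → ℝ) (hI : IntervalIntegrable p volume 0 (2*π))
    (hp1 : ∫ α in (0:ℝ)..(2*π), p α = 1) (g : Fin 2) :
    mInt (fun α => p α • ((Rot α)ᵀ * Iproj g * Rot α)) = rhoM (cMom p) (sMom p) g := by
  rcases fin2 g with rfl | rfl
  · have h1 : mInt (fun α => p α • ((Rot α)ᵀ * Iproj 0 * Rot α))
        = mInt (fun α => !![p α * Real.cos α^2, p α * (Real.cos α * Real.sin α);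
                            p α * (Real.cos α * Real.sin α), p α * Real.sin α^2]) := by
      apply mInt_congr
      intro α _
      rw [show (Rot α)ᵀ * Iproj 0 * Rot α = Pm α 0 from rfl, Pm_zero]
      ext i j
      fin_cases i <;> fin_cases j <;> simp [Matrix.smul_apply]
    rw [h1, mInt_fin, rhoM_zero, int_cos_sq p hI hp1, int_sin_sq p hI hp1, int_cos_sin p]
  · have h1 : mInt (fun α => p α • ((Rot α)ᵀ * Iproj 1 * Rot α))
        = mInt (fun α => !![p α * Real.sin α^2, -(p α * (Real.cos α * Real.sin α));
                            -(p α * (Real.cos α * Real.sin α)), p α * Real.cos α^2]) := by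
      apply mInt_congr
      intro α _
      rw [show (Rot α)ᵀ * Iproj 1 * Rot α = Pm α 1 from rfl, Pm_one]
      ext i j
      fin_cases i <;> fin_cases j <;> simp [Matrix.smul_apply] <;> ring
    rw [h1, mInt_fin, rhoM_one, int_cos_sq p hI hp1, int_sin_sq p hI hp1,
      intervalIntegral.integral_neg, int_cos_sin p]
lemma s2_shift (p : ℝ → ℝ) (hI : IntervalIntegrable p volume 0 (2*π))
    (hp1 : ∫ α in (0:ℝ)..(2*π), p α = 1) (φv : ℝ) :
    s2Mom (pShift p φv)
      = (1 - (cMom p * Real.cos (2*φv) + sMom p * Real.sin (2*φv)))/2 := by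
  set q : ℝ → ℝ := fun β => p (toIcoMod Real.two_pi_pos 0 β) with hq
  have hper : Function.Periodic (fun β => q β * Real.sin (β - φv)^2) (2*π) := by
    intro β
    simp only [hq]
    rw [toIcoMod_add_right]
    have h2 : β + 2*π - φv = (β - φv) + 2*π := by ring
    rw [h2, Real.sin_add_two_pi]
  have step1 : s2Mom (pShift p φv)
      = ∫ α in (0:ℝ)..(2*π), (fun β => q β * Real.sin (β - φv)^2) (α + φv) := by
    unfold s2Mom pShift
    apply intervalIntegral.integral_congr
    intro α _
    simp only [hq]
    rw [add_sub_cancel_right]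
  have step15 : (∫ α in (0:ℝ)..(2*π), (fun β => q β * Real.sin (β - φv)^2) (α + φv))
      = ∫ β in (0+φv)..(2*π+φv), q β * Real.sin (β - φv)^2 :=
    intervalIntegral.integral_comp_add_right (fun β => q β * Real.sin (β - φv)^2) φv
  rw [step1, step15]
  have step2 : ∫ β in (0+φv)..(2*π+φv), q β * Real.sin (β - φv)^2
      = ∫ β in (0:ℝ)..(0+2*π), q β * Real.sin (β - φv)^2 := by
    rw [show (0+φv : ℝ) = φv by ring, show (2*π+φv : ℝ) = φv + 2*π by ring]
    exact hper.intervalIntegral_add_eq φv 0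
  rw [step2]
  have step3 : ∫ β in (0:ℝ)..(0+2*π), q β * Real.sin (β - φv)^2
      = ∫ β in (0:ℝ)..(2*π), p β * Real.sin (β - φv)^2 := by
    rw [zero_add]
    apply intervalIntegral.integral_congr_ae
    have h2π : ∀ᵐ (x : ℝ), x ≠ 2*π := by
      rw [MeasureTheory.ae_iff]
      simp only [not_not]
      rw [show {a : ℝ | a = 2*π} = {2*π} from Set.setOf_eq_eq_singleton]
      exact measure_singleton _
    filter_upwards [h2π] with x hx hmem
    have hxI : x ∈ Set.Ico (0:ℝ) (0 + 2*π) := by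
      rw [Set.uIoc_of_le (by positivity : (0:ℝ) ≤ 2*π)] at hmem
      refine ⟨le_of_lt hmem.1, ?_⟩
      rw [zero_add]
      exact lt_of_le_of_ne hmem.2 hx
    simp only [hq]
    rw [(toIcoMod_eq_self Real.two_pi_pos).mpr hxI]
  rw [step3]
  have hc2 : Continuous fun α : ℝ => Real.cos (2*α) := by fun_prop
  have hs2 : Continuous fun α : ℝ => Real.sin (2*α) := by fun_prop
  have step4 : Set.EqOn (fun β => p β * Real.sin (β - φv)^2)
      (fun β => (p β - (p β * Real.cos (2*β)) * Real.cos (2*φv)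
        - (p β * Real.sin (2*β)) * Real.sin (2*φv))/2) (Set.uIcc 0 (2*π)) := by
    intro β _
    simp only
    have h1 : Real.sin (β - φv)^2 = 1 - Real.cos (β - φv)^2 := by
      have := Real.sin_sq_add_cos_sq (β - φv); linarith
    have h2 : Real.cos (β - φv)^2 = 1/2 + Real.cos (2*(β-φv))/2 := Real.cos_sq _
    have h3 : (2:ℝ)*(β - φv) = 2*β - 2*φv := by ring
    rw [h1, h2, h3, Real.cos_sub]
    ring
  have hIc : IntervalIntegrable (fun β => (p β * Real.cos (2*β)) * Real.cos (2*φv))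
      volume 0 (2*π) := (hI.mul_continuousOn hc2.continuousOn).mul_const _
  have hIs : IntervalIntegrable (fun β => (p β * Real.sin (2*β)) * Real.sin (2*φv))
      volume 0 (2*π) := (hI.mul_continuousOn hs2.continuousOn).mul_const _
  rw [intervalIntegral.integral_congr step4, intervalIntegral.integral_div,
    intervalIntegral.integral_sub (hI.sub hIc) hIs,
    intervalIntegral.integral_sub hI hIc,
    intervalIntegral.integral_mul_const, intervalIntegral.integral_mul_const, hp1]
  unfold cMom sMom
  ring

end Stmt0Aux


open Stmt0Aux

/-- a source with states `ρ_a^g = ∫₀^{2π} p_a(α) R(α)ᵀ Iᵍ R(α) dα` built from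
probability densities `p₀, p₁` on `[0,2π]` is quasiperfect: with `φ_a = ½ arctan(s_{p_a}/c_{p_a})`,
`P_a^g = R(φ_a)ᵀ Iᵍ R(φ_a)` and `S_a = R(−φ_a)`, there exist matrices `P̃_a^g` and angles
`ψ_a` (with `T_a = R(ψ_a)`) satisfying properties (i)-(ix). -/
theorem stmt0 (p : Fin 2 → ℝ → ℝ)
    (hInt : ∀ a, IntervalIntegrable (p a) volume 0 (2*π))
    (hpos : ∀ a α, 0 ≤ p a α)
    (hprob : ∀ a, ∫ α in (0:ℝ)..(2*π), p a α = 1)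
    (hc : ∀ a, cMom (p a) ≠ 0)
    (φ : Fin 2 → ℝ) (hφ : ∀ a, φ a = (1/2) * Real.arctan (sMom (p a) / cMom (p a)))
    (ρ : Fin 2 → Fin 2 → Matrix (Fin 2) (Fin 2) ℝ)
    (hρ : ∀ a g, ρ a g = mInt (fun α => p a α • ((Rot α)ᵀ * Iproj g * Rot α)))
    (P : Fin 2 → Fin 2 → Matrix (Fin 2) (Fin 2) ℝ)
    (hP : ∀ a g, P a g = (Rot (φ a))ᵀ * Iproj g * Rot (φ a))
    (S : Fin 2 → Matrix (Fin 2) (Fin 2) ℝ)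
    (hS : ∀ a, S a = Rot (-φ a)) :
    ∃ (Pt : Fin 2 → Fin 2 → Matrix (Fin 2) (Fin 2) ℝ) (ψ : Fin 2 → ℝ),
      ∀ a g : Fin 2,
        -- (i)
        (Pt a 0 + Pt a 1 = 1 ∧ P a 0 + P a 1 = 1) ∧
        -- (ii)
        (ρ 0 0 + ρ 0 1 = 1 ∧ ρ 1 0 + ρ 1 1 = 1) ∧
        -- (iii)
        (P a g).trace = 1 ∧
        -- (iv)  (with T_a = R(ψ_a))
        (Rot (ψ a))ᵀ * P a g * Rot (ψ a) = Pt a g ∧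
        -- (v)
        Pt a 0 * Pt a 1 = 0 ∧
        -- (vi)
        Pt a g * ρ (1 - a) 0 * Pt a g = Pt a g * ρ (1 - a) 1 * Pt a g ∧
        -- (vii)
        ((S a)ᵀ * P a g * S a).IsDiag ∧ ((S a)ᵀ * ρ a g * S a).IsDiag ∧
        -- (viii)
        (P a g * ρ a (1 - g)).trace
          ≤ max (s2Mom (pShift (p 0) (φ 0))) (s2Mom (pShift (p 1) (φ 1))) ∧
        -- (ix)
        ((P a g - Pt a g).IsHermitian ∧
          ∀ hH : (P a g - Pt a g).IsHermitian,
            ∑ i, |hH.eigenvalues i|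
              ≤ min (2 * |Real.sin (φ 1 - φ 0 - π/4)|) (2 * |Real.sin (φ 0 - φ 1 - π/4)|)) := by
  classical
  have h2φ : ∀ a, 2 * φ a = Real.arctan (sMom (p a) / cMom (p a)) := by
    intro a; rw [hφ a]; ring
  have hcos2pos : ∀ a, 0 < Real.cos (2 * φ a) := by
    intro a; rw [h2φ a]; exact Real.cos_arctan_pos _
  have halign : ∀ a, sMom (p a) * Real.cos (2 * φ a) = cMom (p a) * Real.sin (2 * φ a) := by
    intro a
    have hcos := (hcos2pos a).ne'
    have ht : Real.sin (2*φ a) / Real.cos (2*φ a) = sMom (p a) / cMom (p a) := by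
      rw [← Real.tan_eq_sin_div_cos, h2φ a, Real.tan_arctan]
    have hca : cMom (p a) ≠ 0 := hc a
    field_simp at ht
    linear_combination -ht
  have hρ' : ∀ a g, ρ a g = rhoM (cMom (p a)) (sMom (p a)) g := fun a g => by
    rw [hρ a g]; exact rho_eq (p a) (hInt a) (hprob a) g
  have hP' : ∀ a g, P a g = Pm (φ a) g := fun a g => hP a g
  set θ : Fin 2 → ℝ := fun a =>
    φ (1 - a) + (if |Real.sin (φ a - φ (1-a) - π/4)| ≤ |Real.sin (φ a - φ (1-a) + π/4)|
      then π/4 else -(π/4)) with hθ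
  have hperp : ∀ a, cMom (p (1-a)) * Real.cos (2 * θ a)
      + sMom (p (1-a)) * Real.sin (2 * θ a) = 0 := by
    intro a
    have h := halign (1-a)
    by_cases hc4 : |Real.sin (φ a - φ (1-a) - π/4)| ≤ |Real.sin (φ a - φ (1-a) + π/4)|
    · have hθa : θ a = φ (1-a) + π/4 := by rw [hθ]; simp only [hc4, if_true]
      rw [hθa, show 2*(φ (1-a) + π/4) = 2*φ (1-a) + π/2 by ring,
        Real.cos_add_pi_div_two, Real.sin_add_pi_div_two]
      linarith
    · have hθa : θ a = φ (1-a) + -(π/4) := by rw [hθ]; simp only [hc4, if_false]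
      rw [hθa, show 2*(φ (1-a) + -(π/4)) = 2*φ (1-a) - π/2 by ring,
        Real.cos_sub_pi_div_two, Real.sin_sub_pi_div_two]
      linarith
  have habs : ∀ u : ℝ, |Real.sin (-u)| = |Real.sin u| := fun u => by
    rw [Real.sin_neg, abs_neg]
  have hsinbound : ∀ a, 2 * |Real.sin (φ a - θ a)|
      ≤ min (2 * |Real.sin (φ 1 - φ 0 - π/4)|) (2 * |Real.sin (φ 0 - φ 1 - π/4)|) := by
    intro a
    rcases fin2 a with rfl | rfl
    · have hswap : |Real.sin (φ 0 - φ 1 + π/4)| = |Real.sin (φ 1 - φ 0 - π/4)| := by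
        rw [← habs (φ 0 - φ 1 + π/4), show -(φ 0 - φ 1 + π/4) = φ 1 - φ 0 - π/4 by ring]
      have hθ0 : θ 0 = φ 1 + (if |Real.sin (φ 0 - φ 1 - π/4)| ≤ |Real.sin (φ 0 - φ 1 + π/4)|
          then π/4 else -(π/4)) := rfl
      by_cases hc4 : |Real.sin (φ 0 - φ 1 - π/4)| ≤ |Real.sin (φ 0 - φ 1 + π/4)|
      · rw [if_pos hc4] at hθ0
        rw [hθ0, show φ 0 - (φ 1 + π/4) = φ 0 - φ 1 - π/4 by ring]
        refine le_min (by rw [← hswap]; linarith) (by linarith)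
      · rw [if_neg hc4] at hθ0
        rw [hθ0, show φ 0 - (φ 1 + -(π/4)) = φ 0 - φ 1 + π/4 by ring]
        push_neg at hc4
        refine le_min (by rw [hswap]) (by rw [hswap]; linarith)
    · have hswap : |Real.sin (φ 1 - φ 0 + π/4)| = |Real.sin (φ 0 - φ 1 - π/4)| := by
        rw [← habs (φ 1 - φ 0 + π/4), show -(φ 1 - φ 0 + π/4) = φ 0 - φ 1 - π/4 by ring]
      have hθ1 : θ 1 = φ 0 + (if |Real.sin (φ 1 - φ 0 - π/4)| ≤ |Real.sin (φ 1 - φ 0 + π/4)|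
          then π/4 else -(π/4)) := rfl
      by_cases hc4 : |Real.sin (φ 1 - φ 0 - π/4)| ≤ |Real.sin (φ 1 - φ 0 + π/4)|
      · rw [if_pos hc4] at hθ1
        rw [hθ1, show φ 1 - (φ 0 + π/4) = φ 1 - φ 0 - π/4 by ring]
        refine le_min (by linarith) (by rw [← hswap]; linarith)
      · rw [if_neg hc4] at hθ1
        rw [hθ1, show φ 1 - (φ 0 + -(π/4)) = φ 1 - φ 0 + π/4 by ring]
        push_neg at hc4
        refine le_min (by rw [hswap]; linarith) (by rw [hswap])
  refine ⟨fun a g => Pm (θ a) g, fun a => θ a - φ a, ?_⟩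
  intro a g
  refine ⟨⟨Pm_sum (θ a), by rw [hP' a 0, hP' a 1]; exact Pm_sum (φ a)⟩,
    ⟨by rw [hρ' 0 0, hρ' 0 1]; exact rhoM_sum _ _,
     by rw [hρ' 1 0, hρ' 1 1]; exact rhoM_sum _ _⟩,
    by rw [hP' a g]; exact Pm_trace _ _,
    ?_, Pm_orth (θ a), ?_, ?_, ?_, ?_, ?_, ?_⟩
  · rw [hP' a g, Pm_conj, show φ a + (θ a - φ a) = θ a by ring]
  · rw [hρ' (1-a) 0, hρ' (1-a) 1]
    exact unbiased (hperp a) g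
  · rw [hP' a g, hS a]
    exact P_conj_diag (φ a) g
  · rw [hρ' a g, hS a]
    exact rho_conj_diag (halign a) g
  · rw [hP' a g, hρ' a (1-g), trace_P_rho]
    rcases fin2 a with rfl | rfl
    · rw [← s2_shift (p 0) (hInt 0) (hprob 0) (φ 0)]
      exact le_max_left _ _
    · rw [← s2_shift (p 1) (hInt 1) (hprob 1) (φ 1)]
      exact le_max_right _ _
  · rw [hP' a g]
    exact (Pm_isHermitian _ _).sub (Pm_isHermitian _ _)
  · intro hH
    have hH' : (Pm (φ a) g - Pm (θ a) g).IsHermitian := by rw [← hP' a g]; exact hH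
    rw [eig_congr (by rw [hP' a g]) hH hH', eig_sum_Pm_sub (φ a) (θ a) g hH']
    exact hsinbound a
end

section
/- Let p be a probability density function on [0, 2π] with c_p ≠ 0 and set φ = (1/2)·arctan(s_p/c_p). Then the shifted density p^φ satisfies s_{p^φ} = ∫₀^{2π} p^φ(α) sin 2α dα = 0, and consequently for g ∈ {0,1}, ∫₀^{2π} p(α) R(α)ᵀ I^g R(α) dα = R(φ)ᵀ · diag(δ_{g0}·c⁽²⁾_{p^φ} + δ_{g1}·s⁽²⁾_{p^φ}, δ_{g0}·s⁽²⁾_{p^φ} + δ_{g1}·c⁽²⁾_{p^φ}) · R(φ), where δ is the Kronecker delta. -/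
open Real Matrix MeasureTheory

/-- second moment `c⁽²⁾_p = ∫₀^{2π} p(α) cos²α dα`. -/
noncomputable def c2Mom (p : ℝ → ℝ) : ℝ := ∫ α in (0:ℝ)..(2*π), p α * (Real.cos α)^2

lemma shift_int (p : ℝ → ℝ) (φ : ℝ) (g : ℝ → ℝ) (hper : Function.Periodic g (2*π)) :
    ∫ α in (0:ℝ)..(2*π), pShift p φ α * g α = ∫ β in (0:ℝ)..(2*π), p β * g (β - φ) := by
  set h : ℝ → ℝ := fun β => p (toIcoMod Real.two_pi_pos 0 β) * g (β - φ) with hh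
  have hper' : Function.Periodic h (2*π) := by
    intro β
    simp only [hh]
    rw [toIcoMod_add_right, show β + 2*π - φ = (β - φ) + 2*π by ring, hper]
  have e1 : ∫ α in (0:ℝ)..(2*π), pShift p φ α * g α = ∫ α in (0:ℝ)..(2*π), h (α + φ) := by
    refine intervalIntegral.integral_congr fun α _ => ?_
    simp [hh, pShift, add_sub_cancel_right]
  rw [e1, intervalIntegral.integral_comp_add_right]
  have e2 : ∫ x in (0:ℝ)+φ..(2*π)+φ, h x = ∫ x in (0:ℝ)..(2*π), h x := by
    have h3 := hper'.intervalIntegral_add_eq φ 0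
    rw [zero_add] at h3
    rw [zero_add, add_comm (2*π) φ, h3]
  rw [e2]
  refine intervalIntegral.integral_congr_ae ?_
  have hne : ∀ᵐ x : ℝ ∂volume, x ≠ 2*π := by
    rw [MeasureTheory.ae_iff]
    simp only [ne_eq, not_not, Set.setOf_eq_eq_singleton]
    exact measure_singleton _
  filter_upwards [hne] with x hx hxI
  rw [Set.uIoc_of_le Real.two_pi_pos.le] at hxI
  have hxI' : x ∈ Set.Ico (0:ℝ) (0 + 2*π) := by
    rw [zero_add]
    exact ⟨hxI.1.le, lt_of_le_of_ne hxI.2 hx⟩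
  simp only [hh]
  rw [(toIcoMod_eq_self _).mpr hxI']

lemma pint (p : ℝ → ℝ) (hInt : IntervalIntegrable p volume 0 (2*π))
    (hprob : ∫ α in (0:ℝ)..(2*π), p α = 1)
    (f : ℝ → ℝ) (a b c : ℝ) (hf : ∀ x, f x = a + b * Real.cos (2*x) + c * Real.sin (2*x)) :
    ∫ α in (0:ℝ)..(2*π), p α * f α = a + b * cMom p + c * sMom p := by
  have hIc : IntervalIntegrable (fun β => p β * Real.cos (2*β)) volume 0 (2*π) :=
    hInt.mul_continuousOn (Continuous.continuousOn (by continuity))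
  have hIs : IntervalIntegrable (fun β => p β * Real.sin (2*β)) volume 0 (2*π) :=
    hInt.mul_continuousOn (Continuous.continuousOn (by continuity))
  have e1 : ∫ α in (0:ℝ)..(2*π), p α * f α
      = ∫ α in (0:ℝ)..(2*π), (a * p α + (b * (p α * Real.cos (2*α)) + c * (p α * Real.sin (2*α)))) := by
    refine intervalIntegral.integral_congr fun α _ => ?_
    rw [hf α]; ring
  rw [e1, intervalIntegral.integral_add (hInt.const_mul a) ((hIc.const_mul b).add (hIs.const_mul c)),
    intervalIntegral.integral_add (hIc.const_mul b) (hIs.const_mul c),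
    intervalIntegral.integral_const_mul, intervalIntegral.integral_const_mul,
    intervalIntegral.integral_const_mul, hprob]
  rw [cMom, sMom]; ring

/-- if `p` is a probability density on `[0,2π]` with `c_p ≠ 0` and
`φ = (1/2) arctan(s_p / c_p)`, then `s_{p^φ} = 0` and
`∫₀^{2π} p(α) R(α)ᵀ Iᵍ R(α) dα
  = R(φ)ᵀ diag(δ_{g0} c⁽²⁾_{p^φ} + δ_{g1} s⁽²⁾_{p^φ}, δ_{g0} s⁽²⁾_{p^φ} + δ_{g1} c⁽²⁾_{p^φ}) R(φ)`. -/
theorem stmt1 (p : ℝ → ℝ)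
    (hInt : IntervalIntegrable p volume 0 (2*π))
    (hpos : ∀ α, 0 ≤ p α)
    (hprob : ∫ α in (0:ℝ)..(2*π), p α = 1)
    (hc : cMom p ≠ 0)
    (φ : ℝ) (hφ : φ = (1/2) * Real.arctan (sMom p / cMom p)) :
    sMom (pShift p φ) = 0 ∧
    ∀ g : Fin 2,
      mInt (fun α => p α • ((Rot α)ᵀ * Iproj g * Rot α)) =
        (Rot φ)ᵀ *
          Matrix.diagonal
            ![(if g = 0 then (1:ℝ) else 0) * c2Mom (pShift p φ)
                + (if g = 1 then (1:ℝ) else 0) * s2Mom (pShift p φ),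
              (if g = 0 then (1:ℝ) else 0) * s2Mom (pShift p φ)
                + (if g = 1 then (1:ℝ) else 0) * c2Mom (pShift p φ)] *
          Rot φ := by
  have hkey : Real.sin (2*φ) * cMom p = Real.cos (2*φ) * sMom p := by
    have h2φ : 2*φ = Real.arctan (sMom p / cMom p) := by rw [hφ]; ring
    rw [h2φ, Real.sin_arctan, Real.cos_arctan, div_mul_eq_mul_div, div_mul_eq_mul_div]
    rw [mul_div_cancel_right₀ _ hc]
    ring
  -- value of sMom of the shift
  have hS : sMom (pShift p φ) = Real.cos (2*φ) * sMom p - Real.sin (2*φ) * cMom p := by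
    have h1 : sMom (pShift p φ) = ∫ β in (0:ℝ)..(2*π), p β * Real.sin (2*(β - φ)) :=
      shift_int p φ (fun β => Real.sin (2*β)) (fun x => by
        show Real.sin (2*(x + 2*π)) = Real.sin (2*x)
        rw [show 2*(x + 2*π) = (2*x) + 2*π + 2*π by ring, Real.sin_add_two_pi, Real.sin_add_two_pi])
    rw [h1, pint p hInt hprob _ 0 (-Real.sin (2*φ)) (Real.cos (2*φ)) (fun x => by
      rw [show 2*(x-φ) = 2*x - 2*φ by ring, Real.sin_sub]; ring)]
    ring
  have hC2 : c2Mom (pShift p φ) =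
      (1 + (Real.cos (2*φ) * cMom p + Real.sin (2*φ) * sMom p))/2 := by
    have h1 : c2Mom (pShift p φ) = ∫ β in (0:ℝ)..(2*π), p β * (Real.cos (β - φ))^2 :=
      shift_int p φ (fun β => (Real.cos β)^2) (fun x => by show (Real.cos (x+2*π))^2 = (Real.cos x)^2; rw [Real.cos_add_two_pi])
    rw [h1, pint p hInt hprob _ (1/2) (Real.cos (2*φ)/2) (Real.sin (2*φ)/2) (fun x => by
      rw [Real.cos_sq, show 2*(x-φ) = 2*x - 2*φ by ring, Real.cos_sub]; ring)]
    ring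
  have hS2 : s2Mom (pShift p φ) =
      (1 - (Real.cos (2*φ) * cMom p + Real.sin (2*φ) * sMom p))/2 := by
    have h1 : s2Mom (pShift p φ) = ∫ β in (0:ℝ)..(2*π), p β * (Real.sin (β - φ))^2 :=
      shift_int p φ (fun β => (Real.sin β)^2) (fun x => by show (Real.sin (x+2*π))^2 = (Real.sin x)^2; rw [Real.sin_add_two_pi])
    rw [h1, pint p hInt hprob _ (1/2) (-(Real.cos (2*φ)/2)) (-(Real.sin (2*φ)/2)) (fun x => by
      rw [Real.sin_sq, Real.cos_sq, show 2*(x-φ) = 2*x - 2*φ by ring, Real.cos_sub]; ring)]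
    ring
  constructor
  · rw [hS]; linear_combination -hkey
  intro g
  have pythφ := Real.sin_sq_add_cos_sq φ
  have pyth2φ := Real.sin_sq_add_cos_sq (2*φ)
  have hcos2 : Real.cos (2*φ) = Real.cos φ^2 - Real.sin φ^2 := by
    rw [Real.cos_two_mul]; linear_combination pythφ
  have hsin2 : Real.sin (2*φ) = 2 * Real.sin φ * Real.cos φ := Real.sin_two_mul φ
  have h1 : Real.cos (2*φ) * (Real.cos (2*φ) * cMom p + Real.sin (2*φ) * sMom p) = cMom p := by
    linear_combination cMom p * pyth2φ - Real.sin (2*φ) * hkey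
  have h2 : Real.sin (2*φ) * (Real.cos (2*φ) * cMom p + Real.sin (2*φ) * sMom p) = sMom p := by
    linear_combination sMom p * pyth2φ + Real.cos (2*φ) * hkey
  have ecc : ∫ α in (0:ℝ)..(2*π), p α * (Real.cos α * Real.cos α)
      = 1/2 + (1/2) * cMom p + 0 * sMom p :=
    pint p hInt hprob _ _ _ _ (fun x => by rw [Real.cos_two_mul]; ring)
  have ecs : ∫ α in (0:ℝ)..(2*π), p α * (Real.cos α * Real.sin α)
      = 0 + 0 * cMom p + (1/2) * sMom p :=
    pint p hInt hprob _ _ _ _ (fun x => by rw [Real.sin_two_mul]; ring)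
  have esc : ∫ α in (0:ℝ)..(2*π), p α * (Real.sin α * Real.cos α)
      = 0 + 0 * cMom p + (1/2) * sMom p :=
    pint p hInt hprob _ _ _ _ (fun x => by rw [Real.sin_two_mul]; ring)
  have ess : ∫ α in (0:ℝ)..(2*π), p α * (Real.sin α * Real.sin α)
      = 1/2 + (-(1/2)) * cMom p + 0 * sMom p :=
    pint p hInt hprob _ _ _ _ (fun x => by
      rw [Real.cos_two_mul]; linear_combination Real.sin_sq_add_cos_sq x)
  fin_cases g
  · ext i j
    fin_cases i <;> fin_cases j <;>
      simp [mInt, Rot, Iproj, Matrix.mul_apply, Fin.sum_univ_two, Matrix.smul_apply,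
        Matrix.vecHead, Matrix.transpose_apply]
    · rw [ecc, hC2, hS2]
      linear_combination (-(1/2))*pythφ + (-(1/2))*h1
        + ((Real.cos (2*φ) * cMom p + Real.sin (2*φ) * sMom p)/2)*hcos2
    · rw [ecs, hC2, hS2]
      linear_combination (-(1/2))*h2
        + ((Real.cos (2*φ) * cMom p + Real.sin (2*φ) * sMom p)/2)*hsin2
    · rw [esc, hC2, hS2]
      linear_combination (-(1/2))*h2
        + ((Real.cos (2*φ) * cMom p + Real.sin (2*φ) * sMom p)/2)*hsin2
    · rw [ess, hC2, hS2]
      linear_combination (-(1/2))*pythφ + (1/2)*h1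
        - ((Real.cos (2*φ) * cMom p + Real.sin (2*φ) * sMom p)/2)*hcos2
  · ext i j
    fin_cases i <;> fin_cases j <;>
      simp [mInt, Rot, Iproj, Matrix.mul_apply, Fin.sum_univ_two, Matrix.smul_apply,
        Matrix.vecHead, Matrix.transpose_apply]
    · rw [ess, hC2, hS2]
      linear_combination (-(1/2))*pythφ + (1/2)*h1
        - ((Real.cos (2*φ) * cMom p + Real.sin (2*φ) * sMom p)/2)*hcos2
    · rw [esc, hC2, hS2]
      linear_combination (1/2)*h2
        - ((Real.cos (2*φ) * cMom p + Real.sin (2*φ) * sMom p)/2)*hsin2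
    · rw [ecs, hC2, hS2]
      linear_combination (1/2)*h2
        - ((Real.cos (2*φ) * cMom p + Real.sin (2*φ) * sMom p)/2)*hsin2
    · rw [ecc, hC2, hS2]
      linear_combination (-(1/2))*pythφ + (-(1/2))*h1
        + ((Real.cos (2*φ) * cMom p + Real.sin (2*φ) * sMom p)/2)*hcos2
end

section
/- Let p, r, t be real numbers with 0 < r ≤ p < p + t < 1, let n_r and n_p be positive integers, and set n = n_r + n_p. Then Σ over all pairs of integers (i_r, i_p) with 0 ≤ i_r ≤ n_r, 0 ≤ i_p ≤ n_p and i_r + i_p ≥ (p + t)·n of C(n_p, i_p)·C(n_r, i_r)·p^{i_p}·(1−p)^{n_p−i_p}·r^{i_r}·(1−r)^{n_r−i_r} is at most e^{−2t²n}. -/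
/-!
Chernoff's method with parameter `λ = 4t`: the tail sum is at most `e^{-λ(p+t)n}` times the
product of the two binomial moment generating functions `(1 - q + q e^λ)^m`, and Hoeffding's lemma
for a Bernoulli variable bounds each factor `1 - q + q e^λ` by `e^{qλ + λ²/8}`. The resulting
exponent is `-2t²n - 4t n_r (p - r) ≤ -2t²n`.
-/

open Real ProbabilityTheory MeasureTheory

lemma one_sub_add_mul_exp_le_exp {q : ℝ} (hq0 : 0 ≤ q) (hq1 : q ≤ 1) (u : ℝ) :
    1 - q + q * exp u ≤ exp (q * u + u ^ 2 / 8) := by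
  set μ : Measure Bool := bernoulliMeasure true false ⟨q, hq0, hq1⟩
  set X : Bool → ℝ := fun b => cond b 1 0
  have hX : ∀ᵐ b ∂μ, X b ∈ Set.Icc 0 1 := ae_of_all _ fun b => by cases b <;> simp [X]
  have hmean : μ[X] = q := by simp [μ, X, integral_bernoulliMeasure]
  have hmgf : mgf (fun b => X b - μ[X]) μ u = exp (-(q * u)) * (1 - q + q * exp u) := by
    rw [hmean, mgf, integral_bernoulliMeasure]
    simp only [X, cond_true, cond_false, smul_eq_mul]
    rw [mul_sub, sub_eq_add_neg, exp_add]
    ring_nf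
  have hvar : ((‖(1 : ℝ) - 0‖₊ / 2) ^ 2 : NNReal) * u ^ 2 / 2 = u ^ 2 / 8 := by
    norm_num; ring
  have := (hasSubgaussianMGF_of_mem_Icc (measurable_of_finite X).aemeasurable hX).mgf_le u
  rw [hmgf, hvar, ← le_div_iff₀' (exp_pos _), ← exp_sub] at this
  simpa [add_comm] using this

lemma Finset.sum_filter_le_sum_mul_exp {ι : Type*} (s : Finset ι) (w f : ι → ℝ)
    (hw : ∀ i ∈ s, 0 ≤ w i) {l : ℝ} (hl : 0 ≤ l) (a : ℝ) :
    ∑ i ∈ s with a ≤ f i, w i ≤ ∑ i ∈ s, w i * exp (l * (f i - a)) := by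
  calc ∑ i ∈ s with a ≤ f i, w i
      ≤ ∑ i ∈ s with a ≤ f i, w i * exp (l * (f i - a)) := by
        refine Finset.sum_le_sum fun i hi => ?_
        rw [Finset.mem_filter] at hi
        exact le_mul_of_one_le_right (hw i hi.1)
          (one_le_exp (mul_nonneg hl (sub_nonneg.2 hi.2)))
    _ ≤ ∑ i ∈ s, w i * exp (l * (f i - a)) :=
        Finset.sum_le_sum_of_subset_of_nonneg (Finset.filter_subset _ _)
          fun i hi _ => mul_nonneg (hw i hi) (exp_pos _).le

lemma sum_choose_mul_pow_mul_exp (n : ℕ) (q l : ℝ) :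
    ∑ i ∈ Finset.range (n + 1), n.choose i * q ^ i * (1 - q) ^ (n - i) * exp (l * i)
      = (1 - q + q * exp l) ^ n := by
  rw [add_comm (1 - q), add_pow]
  refine Finset.sum_congr rfl fun i _ => ?_
  rw [mul_pow, ← exp_nat_mul, mul_comm (i : ℝ)]
  ring

lemma sum_choose_mul_pow_mul_exp_le {q : ℝ} (hq0 : 0 ≤ q) (hq1 : q ≤ 1) (n : ℕ) (l : ℝ) :
    ∑ i ∈ Finset.range (n + 1), n.choose i * q ^ i * (1 - q) ^ (n - i) * exp (l * i)
      ≤ exp (n * (q * l + l ^ 2 / 8)) := by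
  rw [sum_choose_mul_pow_mul_exp, exp_nat_mul]
  have hpos : 0 ≤ 1 - q + q * exp l := by nlinarith [exp_pos l]
  exact pow_le_pow_left₀ hpos (one_sub_add_mul_exp_le_exp hq0 hq1 l) n

lemma sum_two_binomial_tail_le_exp {p r : ℝ} (hp0 : 0 ≤ p) (hp1 : p ≤ 1) (hr0 : 0 ≤ r) (hr1 : r ≤ 1)
    (nr np : ℕ) {l : ℝ} (hl : 0 ≤ l) (a : ℝ) :
    ∑ x ∈ (Finset.range (nr + 1) ×ˢ Finset.range (np + 1)).filter
        (fun x => a ≤ (x.1 : ℝ) + (x.2 : ℝ)),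
      (np.choose x.2 : ℝ) * (nr.choose x.1 : ℝ) *
        p ^ x.2 * (1 - p) ^ (np - x.2) * r ^ x.1 * (1 - r) ^ (nr - x.1)
    ≤ exp (-(l * a) + nr * (r * l + l ^ 2 / 8) + np * (p * l + l ^ 2 / 8)) := by
  calc _ ≤ ∑ x ∈ Finset.range (nr + 1) ×ˢ Finset.range (np + 1),
          (np.choose x.2 : ℝ) * (nr.choose x.1 : ℝ) *
            p ^ x.2 * (1 - p) ^ (np - x.2) * r ^ x.1 * (1 - r) ^ (nr - x.1) *
            exp (l * ((x.1 : ℝ) + x.2 - a)) :=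
        Finset.sum_filter_le_sum_mul_exp _ _ _ (fun _ _ => by positivity) hl a
    _ = exp (-(l * a)) *
          ((∑ i ∈ Finset.range (nr + 1), nr.choose i * r ^ i * (1 - r) ^ (nr - i) * exp (l * i)) *
            ∑ j ∈ Finset.range (np + 1), np.choose j * p ^ j * (1 - p) ^ (np - j) * exp (l * j)) := by
        rw [Finset.sum_mul_sum, Finset.mul_sum, Finset.sum_product]
        refine Finset.sum_congr rfl fun i _ => ?_
        rw [Finset.mul_sum]
        refine Finset.sum_congr rfl fun j _ => ?_
        rw [show l * ((i : ℝ) + j - a) = -(l * a) + l * i + l * j by ring, exp_add, exp_add]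
        ring
    _ ≤ exp (-(l * a)) * (exp (nr * (r * l + l ^ 2 / 8)) * exp (np * (p * l + l ^ 2 / 8))) := by
        gcongr
        · exact sum_choose_mul_pow_mul_exp_le hr0 hr1 nr l
        · exact sum_choose_mul_pow_mul_exp_le hp0 hp1 np l
    _ = _ := by rw [← exp_add, ← exp_add, add_assoc]

theorem stmt14_general (p r t : ℝ) (hr : 0 < r) (hrp : r ≤ p) (hpt : p < p + t) (h1 : p + t < 1)
    (nr np : ℕ) :
    ∑ x ∈ (Finset.range (nr + 1) ×ˢ Finset.range (np + 1)).filter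
        (fun x => (p + t) * ((nr : ℝ) + np) ≤ (x.1 : ℝ) + (x.2 : ℝ)),
      (np.choose x.2 : ℝ) * (nr.choose x.1 : ℝ) *
        p ^ x.2 * (1 - p) ^ (np - x.2) * r ^ x.1 * (1 - r) ^ (nr - x.1)
    ≤ Real.exp (-2 * t ^ 2 * ((nr : ℝ) + np)) := by
  have ht : 0 ≤ t := by linarith
  refine (sum_two_binomial_tail_le_exp (hr.le.trans hrp) (by linarith) hr.le (by linarith) nr np
    (by linarith : 0 ≤ 4 * t) _).trans (exp_le_exp.2 ?_)
  nlinarith [mul_nonneg (mul_nonneg ht (sub_nonneg.2 hrp)) (Nat.cast_nonneg (α := ℝ) nr)]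

/-- upper tail bound for a sum of two binomial distributions.
For `0 < r ≤ p < p + t < 1` and `n = n_r + n_p`,
`Σ_{i_r + i_p ≥ (p+t)n} C(n_p,i_p) C(n_r,i_r) p^{i_p}(1−p)^{n_p−i_p} r^{i_r}(1−r)^{n_r−i_r}
  ≤ e^{−2t²n}`. -/
theorem stmt14 (p r t : ℝ) (hr : 0 < r) (hrp : r ≤ p) (hpt : p < p + t) (h1 : p + t < 1)
    (nr np : ℕ) (hnr : 0 < nr) (hnp : 0 < np) :
    ∑ x ∈ (Finset.range (nr + 1) ×ˢ Finset.range (np + 1)).filter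
        (fun x => (p + t) * ((nr : ℝ) + np) ≤ (x.1 : ℝ) + (x.2 : ℝ)),
      (np.choose x.2 : ℝ) * (nr.choose x.1 : ℝ) *
        p ^ x.2 * (1 - p) ^ (np - x.2) * r ^ x.1 * (1 - r) ^ (nr - x.1)
    ≤ Real.exp (-2 * t ^ 2 * ((nr : ℝ) + np)) :=
  stmt14_general p r t hr hrp hpt h1 nr np
end

section
/- (Gilbert–Varshamov) Let n, r, t be strictly positive integers with r ≤ n satisfying 2^{r+1} > Σ_{i=0}^{2t} C(n, i). Then there exists a linear subspace S of F₂ⁿ of dimension n − r such that every nonzero vector in S has Hamming weight at least 2t + 1 (i.e., S is an (n, n−r) linear code that can correct t errors). -/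
/-!
Greedy construction: if a code `S ≤ Kⁿ` of dimension `k` has minimum weight greater than `d`,
the Hamming balls of radius `d` around its `q ^ k` codewords cover at most `q ^ k · V` vectors,
`V` the volume of such a ball. While this is less than `q ^ n`, some `v` lies at distance more
than `d` from every codeword, and then `S ⊔ K ∙ v` still has minimum weight greater than `d`:
each of its words outside `S` is a nonzero multiple of `v - s` for some `s ∈ S`.
-/

open Finset Module Pointwise

variable {ι β : Type*} [Fintype ι] [DecidableEq ι]

lemma card_filter_hammingNorm_le_le [Fintype β] [DecidableEq β] [Zero β] (m : ℕ) :
    #{v : ι → β | hammingNorm v ≤ m} ≤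
      ∑ i ∈ range (m + 1), (Fintype.card ι).choose i * (Fintype.card β - 1) ^ i := by
  let supportedIn (s : Finset ι) : Finset (ι → β) :=
    Fintype.piFinset fun i => if i ∈ s then {0}ᶜ else {0}
  have hcover : ({v | hammingNorm v ≤ m} : Finset (ι → β)) ⊆
      (range (m + 1)).biUnion fun i => (powersetCard i univ).biUnion supportedIn := by
    intro v hv
    simp only [mem_filter, mem_univ, true_and] at hv
    simp only [mem_biUnion, mem_range, mem_powersetCard_univ]
    refine ⟨_, Nat.lt_succ_of_le hv, ({i | v i ≠ 0} : Finset ι), rfl, ?_⟩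
    simp only [supportedIn, Fintype.mem_piFinset]
    intro i
    by_cases hi : v i = 0 <;> simp [hi]
  have hsupp (s : Finset ι) : #(supportedIn s) = (Fintype.card β - 1) ^ #s := by
    simp [supportedIn, apply_ite card, card_compl]
  calc #{v : ι → β | hammingNorm v ≤ m}
      ≤ ∑ i ∈ range (m + 1), ∑ s ∈ powersetCard i univ, #(supportedIn s) :=
        (card_le_card hcover).trans <| card_biUnion_le.trans <|
          sum_le_sum fun _ _ => card_biUnion_le
    _ = _ := by
        refine sum_congr rfl fun i _ => ?_
        rw [sum_congr rfl fun s hs => by rw [hsupp, (mem_powersetCard.mp hs).2], sum_const,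
          card_powersetCard, card_univ, smul_eq_mul]

lemma exists_forall_lt_hammingDist [Fintype β] [DecidableEq β] [AddGroup β]
    {A : Finset (ι → β)} {d : ℕ}
    (h : #A * #{v : ι → β | hammingNorm v ≤ d} < Fintype.card β ^ Fintype.card ι) :
    ∃ v, ∀ a ∈ A, d < hammingDist a v := by
  have hcard :
      #(A + ({v | hammingNorm v ≤ d} : Finset (ι → β))) < #(univ : Finset (ι → β)) := by
    rw [card_univ, Fintype.card_fun]
    exact card_add_le.trans_lt h
  obtain ⟨v, -, hv⟩ := exists_mem_notMem_of_card_lt_card hcard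
  refine ⟨v, fun a ha => not_le.mp fun hle => hv ?_⟩
  rw [hammingDist_eq_hammingNorm] at hle
  exact add_neg_cancel_left a v ▸ add_mem_add ha (by simpa using hle)

section Greedy

variable {K : Type*} [Field K] [Fintype K] [DecidableEq K]

lemma Submodule.exists_finrank_succ_lt_hammingNorm (S : Submodule K (ι → K)) {d : ℕ}
    (hS : ∀ v ∈ S, v ≠ 0 → d < hammingNorm v)
    (hcard : Fintype.card K ^ finrank K S * #{v : ι → K | hammingNorm v ≤ d} <
      Fintype.card K ^ Fintype.card ι) :
    ∃ S' : Submodule K (ι → K), finrank K S' = finrank K S + 1 ∧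
      ∀ v ∈ S', v ≠ 0 → d < hammingNorm v := by
  classical
  have hSfin : #(S : Set (ι → K)).toFinset = Fintype.card K ^ finrank K S := by
    simpa using card_eq_pow_finrank (K := K) (V := S)
  obtain ⟨v, hv⟩ := exists_forall_lt_hammingDist (hSfin ▸ hcard)
  simp only [Set.mem_toFinset, SetLike.mem_coe] at hv
  have hvS : v ∉ S := fun hvS => by simpa using hv v hvS
  refine ⟨S ⊔ K ∙ v, finrank_sup_span_singleton hvS, fun w hw hw0 => ?_⟩
  obtain ⟨s, hs, z, hz, rfl⟩ := Submodule.mem_sup.mp hw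
  obtain ⟨c, rfl⟩ := Submodule.mem_span_singleton.mp hz
  by_cases hc : c = 0
  · subst hc
    simp only [zero_smul, add_zero] at hw0 ⊢
    exact hS s hs hw0
  · calc d < hammingDist (-c⁻¹ • s) v := hv _ (S.smul_mem _ hs)
      _ = hammingNorm (c • (c⁻¹ • s + v)) := by
          rw [hammingDist_eq_hammingNorm, neg_smul, neg_neg,
            hammingNorm_smul fun _ => (isUnit_iff_ne_zero.mpr hc).isSMulRegular K]
      _ = hammingNorm (s + c • v) := by rw [smul_add, smul_inv_smul₀ hc]

theorem exists_submodule_finrank_eq_lt_hammingNorm (k d : ℕ)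
    (h : Fintype.card K ^ k * #{v : ι → K | hammingNorm v ≤ d} <
      Fintype.card K ^ (Fintype.card ι + 1)) :
    ∃ S : Submodule K (ι → K), finrank K S = k ∧
      ∀ v ∈ S, v ≠ 0 → d < hammingNorm v := by
  induction k with
  | zero =>
    exact ⟨⊥, finrank_bot K _, fun v hv hv0 => absurd ((Submodule.mem_bot K).mp hv) hv0⟩
  | succ k ih =>
    have hq : 1 ≤ Fintype.card K := Fintype.card_pos
    have hstep : Fintype.card K ^ k * #{v : ι → K | hammingNorm v ≤ d} <
        Fintype.card K ^ Fintype.card ι := by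
      rw [pow_succ', mul_assoc, pow_succ'] at h
      exact Nat.lt_of_mul_lt_mul_left h
    obtain ⟨S, hSk, hS⟩ := ih <| hstep.trans_le <| Nat.pow_le_pow_right hq (Nat.le_succ _)
    exact hSk ▸ S.exists_finrank_succ_lt_hammingNorm hS (hSk ▸ hstep)

end Greedy

theorem stmt17_general (n r t : ℕ) (hrn : r ≤ n)
    (hgv : (∑ i ∈ Finset.range (2 * t + 1), n.choose i) < 2 ^ (r + 1)) :
    ∃ S : Submodule (ZMod 2) (Fin n → ZMod 2),
      Module.finrank (ZMod 2) S = n - r ∧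
      ∀ v ∈ S, v ≠ 0 → 2 * t + 1 ≤ hammingNorm v := by
  have hball : #{v : Fin n → ZMod 2 | hammingNorm v ≤ 2 * t} < 2 ^ (r + 1) := by
    have := card_filter_hammingNorm_le_le (ι := Fin n) (β := ZMod 2) (2 * t)
    simp only [Fintype.card_fin, ZMod.card, Nat.add_one_sub_one, one_pow, mul_one] at this
    exact this.trans_lt hgv
  apply exists_submodule_finrank_eq_lt_hammingNorm
  calc Fintype.card (ZMod 2) ^ (n - r) * #{v : Fin n → ZMod 2 | hammingNorm v ≤ 2 * t}
      < 2 ^ (n - r) * 2 ^ (r + 1) := by rw [ZMod.card]; gcongr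
    _ = Fintype.card (ZMod 2) ^ (Fintype.card (Fin n) + 1) := by
        rw [ZMod.card, Fintype.card_fin, ← pow_add]; congr 1; omega

/-- Gilbert–Varshamov: if `2^{r+1} > Σ_{i=0}^{2t} C(n,i)` with
`n, r, t > 0` and `r ≤ n`, then there is a linear `(n, n−r)` code over `F₂` all of whose
nonzero words have Hamming weight at least `2t + 1` (i.e. it corrects `t` errors). -/
theorem stmt17 (n r t : ℕ) (hn : 0 < n) (hr : 0 < r) (ht : 0 < t) (hrn : r ≤ n)
    (hgv : (∑ i ∈ Finset.range (2 * t + 1), n.choose i) < 2 ^ (r + 1)) :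
    ∃ S : Submodule (ZMod 2) (Fin n → ZMod 2),
      Module.finrank (ZMod 2) S = n - r ∧
      ∀ v ∈ S, v ≠ 0 → 2 * t + 1 ≤ hammingNorm v :=
  stmt17_general n r t hrn hgv
end

section
/- Let r, n, d_min, m be positive integers with r + m ≤ n, and let F be an r×n binary matrix whose rows are linearly independent over F₂; let 𝓕 denote the set of rows of F. Suppose 2^{n−r−m+1} > Σ_{i=0}^{d_min−1} C(n, i). Then there exists a set W of m vectors in F₂ⁿ such that the set W ∪ 𝓕 is linearly independent over F₂ and every vector v in span(W ∪ 𝓕) \ span(𝓕) has Hamming weight at least d_min. -/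
/-!
Greedy (Gilbert–Varshamov) construction. Suppose `k < m` vectors have been chosen, so that
`S = span(W ∪ 𝓕)` has at most `2^(k+r)` elements. The Hamming balls of radius `d_min - 1` around
the points of `S` contain at most `2^(k+r) · Σ_{i<d_min} C(n,i) < 2^n` vectors, so some `w` lies at
distance at least `d_min` from all of `S`. Every vector of `span(insert w S)` outside `S` is
`a • w + z` with `a ≠ 0` and `z ∈ S`, hence has the weight of `w + a⁻¹ • z`, at least `d_min`.
-/

open Finset Submodule
open scoped Pointwise

section Hamming

variable {ι K : Type*} [Fintype ι]

theorem card_hammingNorm_lt_le_sum_choose [DecidableEq ι] (d : ℕ) :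
    #{v : ι → ZMod 2 | hammingNorm v < d} ≤ ∑ i ∈ range d, (Fintype.card ι).choose i :=
  calc #{v : ι → ZMod 2 | hammingNorm v < d}
      ≤ #((range d).biUnion fun i => powersetCard i (univ : Finset ι)) := by
        refine card_le_card_of_injOn (fun v => ({i | v i ≠ 0} : Finset ι)) (fun v hv => ?_)
          (fun v _ w _ hvw => funext fun i => ?_)
        · simpa [hammingNorm] using hv
        -- a vector over `ZMod 2` is determined by its support
        · have := Finset.ext_iff.1 hvw i
          simp only [mem_filter, mem_univ, true_and] at this
          revert this
          generalize v i = a, w i = b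
          revert a b
          decide
    _ ≤ ∑ i ∈ range d, #(powersetCard i (univ : Finset ι)) := card_biUnion_le
    _ = ∑ i ∈ range d, (Fintype.card ι).choose i := by simp

theorem exists_forall_le_hammingNorm_sub [DecidableEq ι] [AddGroup K] [Fintype K] [DecidableEq K]
    (S : Set (ι → K)) (d : ℕ)
    (h : Nat.card S * #{v : ι → K | hammingNorm v < d} < Fintype.card K ^ Fintype.card ι) :
    ∃ w, ∀ u ∈ S, d ≤ hammingNorm (w - u) := by
  obtain ⟨w, -, hw⟩ := exists_mem_notMem_of_card_lt_card
    (s := ({v : ι → K | hammingNorm v < d} : Finset (ι → K)) + S.toFinite.toFinset)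
    (t := univ) <| by
      rw [card_univ, Fintype.card_fun]
      refine card_add_le.trans_lt ?_
      rw [← Set.ncard_eq_toFinset_card S S.toFinite, mul_comm]
      exact h
  refine ⟨w, fun u hu => not_lt.1 fun hlt => hw ?_⟩
  exact mem_add.2 ⟨w - u, by simpa, u, by simpa, sub_add_cancel w u⟩

theorem le_hammingNorm_of_mem_span_insert [Field K] [DecidableEq K] {T : Set (ι → K)}
    {w : ι → K} {d : ℕ} (hw : ∀ u ∈ span K T, d ≤ hammingNorm (w - u)) {v : ι → K}
    (hv : v ∈ span K (insert w T)) (hvT : v ∉ span K T) : d ≤ hammingNorm v := by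
  obtain ⟨a, z, hz, rfl⟩ := mem_span_insert.1 hv
  have ha : a ≠ 0 := by
    rintro rfl
    exact hvT (by simpa using hz)
  calc d ≤ hammingNorm (w - -(a⁻¹ • z)) := hw _ (neg_mem (smul_mem _ _ hz))
    _ = hammingNorm (a • (w - -(a⁻¹ • z))) :=
      (hammingNorm_smul (fun _ => .of_ne_zero ha) _).symm
    _ = hammingNorm (a • w + z) := by
      rw [smul_sub, smul_neg, smul_smul, mul_inv_cancel₀ ha, one_smul, sub_neg_eq_add]

end Hamming

theorem natCard_span_le_pow_ncard {K V : Type*} [Field K] [Fintype K] [AddCommGroup V]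
    [Module K V] {T : Set V} (hT : T.Finite) :
    Nat.card (span K T) ≤ Fintype.card K ^ T.ncard := by
  have := FiniteDimensional.span_of_finite K hT
  have := hT.fintype
  rw [Module.natCard_eq_pow_finrank (K := K), Nat.card_eq_fintype_card, Set.ncard_eq_toFinset_card']
  exact Nat.pow_le_pow_right Fintype.card_pos (finrank_span_le_card T)

section Extension

variable {ι K : Type*} [Fintype ι] [DecidableEq ι] [Field K] [Fintype K] [DecidableEq K]

def MinWeightOutside (d : ℕ) (B T : Set (ι → K)) : Prop :=
  ∀ v ∈ span K T, v ∉ span K B → d ≤ hammingNorm v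

theorem exists_notMem_span_minWeightOutside_insert {d : ℕ} (hd : 0 < d) {B T : Set (ι → K)}
    (hT : LinearIndepOn K id T) (hBT : MinWeightOutside d B T)
    (hcard : Nat.card (span K T) * #{v : ι → K | hammingNorm v < d}
      < Fintype.card K ^ Fintype.card ι) :
    ∃ w ∉ span K T, LinearIndepOn K id (insert w T) ∧ MinWeightOutside d B (insert w T) := by
  obtain ⟨w, hw⟩ := exists_forall_le_hammingNorm_sub _ d hcard
  have hwT : w ∉ span K T := fun h => by simpa [hd.ne'] using hw w h
  refine ⟨w, hwT, hT.id_insert hwT, fun v hv hvB => ?_⟩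
  by_cases hvT : v ∈ span K T
  · exact hBT v hvT hvB
  · exact le_hammingNorm_of_mem_span_insert hw hv hvT

theorem exists_finset_linearIndepOn_union_minWeightOutside {d : ℕ} (hd : 0 < d)
    {B : Set (ι → K)} (hB : LinearIndepOn K id B) (k : ℕ)
    -- the exponent is one higher because the last vector is chosen next to only `k - 1` others
    (hcount : Fintype.card K ^ (k + B.ncard) * #{v : ι → K | hammingNorm v < d}
      < Fintype.card K ^ (Fintype.card ι + 1)) :
    ∃ s : Finset (ι → K), #s = k ∧ LinearIndepOn K id (↑s ∪ B) ∧
      MinWeightOutside d B (↑s ∪ B) := by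
  induction k with
  | zero => exact ⟨∅, rfl, by simpa, fun v hv hvB => absurd (by simpa using hv) hvB⟩
  | succ k ih =>
    set q := Fintype.card K
    have hq : 0 < q := Fintype.card_pos
    have hstep : q ^ (k + B.ncard) * #{v : ι → K | hammingNorm v < d} < q ^ Fintype.card ι := by
      refine Nat.lt_of_mul_lt_mul_right (a := q) ?_
      simpa only [add_right_comm k 1, pow_succ, mul_right_comm] using hcount
    obtain ⟨s, rfl, hind, hwt⟩ := ih (hstep.trans_le (Nat.pow_le_pow_right hq (Nat.le_succ _)))
    have hspan : Nat.card (span K (↑s ∪ B)) ≤ q ^ (#s + B.ncard) :=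
      (natCard_span_le_pow_ncard (Set.toFinite _)).trans
        (Nat.pow_le_pow_right hq ((Set.ncard_union_le _ _).trans (by simp)))
    obtain ⟨w, hw, hind', hwt'⟩ :=
      exists_notMem_span_minWeightOutside_insert hd hind hwt
        ((Nat.mul_le_mul_right _ hspan).trans_lt hstep)
    refine ⟨insert w s, card_insert_of_notMem fun h => hw (subset_span (Or.inl h)), ?_, ?_⟩
    all_goals rwa [coe_insert, Set.insert_union]

end Extension

theorem stmt19_general (r n dmin m : ℕ) (hdmin : 0 < dmin)
    (hrmn : r + m ≤ n)
    (F : Matrix (Fin r) (Fin n) (ZMod 2))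
    (hF : LinearIndependent (ZMod 2) (fun i => F i))
    (hcount : (∑ i ∈ Finset.range dmin, n.choose i) < 2 ^ (n - r - m + 1)) :
    ∃ W : Finset (Fin n → ZMod 2),
      W.card = m ∧
      LinearIndependent (ZMod 2)
        (fun x : ((W : Set (Fin n → ZMod 2)) ∪ Set.range (fun i => F i) : Set (Fin n → ZMod 2)) =>
          (x : Fin n → ZMod 2)) ∧
      ∀ v ∈ Submodule.span (ZMod 2)
          ((W : Set (Fin n → ZMod 2)) ∪ Set.range (fun i => F i)),
        v ∉ Submodule.span (ZMod 2) (Set.range (fun i => F i)) →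
          dmin ≤ hammingNorm v := by
  refine exists_finset_linearIndepOn_union_minWeightOutside hdmin hF.linearIndepOn_id m ?_
  have hball : #{v : Fin n → ZMod 2 | hammingNorm v < dmin} < 2 ^ (n - r - m + 1) :=
    (card_hammingNorm_lt_le_sum_choose dmin).trans_lt (by simpa using hcount)
  rw [ZMod.card, Set.ncard_range_of_injective hF.injective, Nat.card_fin, Fintype.card_fin]
  calc 2 ^ (m + r) * #{v : Fin n → ZMod 2 | hammingNorm v < dmin}
      < 2 ^ (m + r) * 2 ^ (n - r - m + 1) := by gcongr
    _ = 2 ^ (n + 1) := by rw [← pow_add]; congr 1; omega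

/-- privacy amplification: given an `r × n` binary parity check matrix `F`
with linearly independent rows, if `2^{n−r−m+1} > Σ_{i=0}^{d_min−1} C(n,i)` then there is a
set `W` of `m` vectors of `F₂ⁿ` such that `W ∪ 𝓕` is linearly independent and every vector
of `span(W ∪ 𝓕) \ span(𝓕)` has Hamming weight at least `d_min`. -/
theorem stmt19 (r n dmin m : ℕ) (hr : 0 < r) (hn : 0 < n) (hdmin : 0 < dmin) (hm : 0 < m)
    (hrmn : r + m ≤ n)
    (F : Matrix (Fin r) (Fin n) (ZMod 2))
    (hF : LinearIndependent (ZMod 2) (fun i => F i))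
    (hcount : (∑ i ∈ Finset.range dmin, n.choose i) < 2 ^ (n - r - m + 1)) :
    ∃ W : Finset (Fin n → ZMod 2),
      W.card = m ∧
      LinearIndependent (ZMod 2)
        (fun x : ((W : Set (Fin n → ZMod 2)) ∪ Set.range (fun i => F i) : Set (Fin n → ZMod 2)) =>
          (x : Fin n → ZMod 2)) ∧
      ∀ v ∈ Submodule.span (ZMod 2)
          ((W : Set (Fin n → ZMod 2)) ∪ Set.range (fun i => F i)),
        v ∉ Submodule.span (ZMod 2) (Set.range (fun i => F i)) →
          dmin ≤ hammingNorm v :=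
  stmt19_general r n dmin m hdmin hrmn F hF hcount
end
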